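/- Let ℓ, ℓ̄ ∈ ℕ^r with ℓ ≤ ℓ̄ and F(ℓ̄) = F(ℓ). Then for every subspace G of V with G ≠ F(ℓ) and every index i: if F(ℓ+E_i) = G then F(ℓ̄+E_i) = G. -/

import Mathlib

/-- `Gbar r ℓ` is the subspace of `r`-tuples of power series whose `i`-th component has
order at least `ℓ i`, for every `i`. -/
noncomputable def Gbar (r : ℕ) (ℓ : Fin r → ℕ) : Submodule ℂ (Fin r → PowerSeries ℂ) where
  carrier := {f | ∀ i : Fin r, (ℓ i : ℕ∞) ≤ (f i).order}
  zero_mem' := by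
    intro i
    simp [PowerSeries.order_zero]
  add_mem' := by
    intro a b ha hb i
    refine le_trans (le_min (ha i) (hb i)) ?_
    simpa using PowerSeries.min_order_le_order_add (a i) (b i)
  smul_mem' := by
    intro c f hf i
    refine PowerSeries.le_order _ _ ?_
    intro n hn
    have hlt : (n : ℕ∞) < ((f : Fin r → PowerSeries ℂ) i).order := lt_of_lt_of_le hn (hf i)
    have : (PowerSeries.coeff n) ((c • f) i) = c • (PowerSeries.coeff n) (f i) := by
      simp
    rw [this, PowerSeries.coeff_of_lt_order n hlt, smul_zero]

/-- `F O ℓ = O ∩ Ḡ(ℓ)`, the valuation filtration of the subspace `O`. -/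
noncomputable def Ffil (r : ℕ) (O : Submodule ℂ (Fin r → PowerSeries ℂ)) (ℓ : Fin r → ℕ) :
    Submodule ℂ (Fin r → PowerSeries ℂ) :=
  O ⊓ Gbar r ℓ

/-- `hfun O ℓ = dim_ℂ O / (O ∩ Ḡ(ℓ))`, the Hilbert function of the filtration. -/
noncomputable def hfun (r : ℕ) (O : Submodule ℂ (Fin r → PowerSeries ℂ)) (ℓ : Fin r → ℕ) : ℕ :=
  Module.finrank ℂ (O ⧸ (Gbar r ℓ).comap O.subtype)

/-- `hbarfun O ℓ = dim_ℂ V / (Ḡ(ℓ) + O)`. -/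
noncomputable def hbarfun (r : ℕ) (O : Submodule ℂ (Fin r → PowerSeries ℂ)) (ℓ : Fin r → ℕ) : ℕ :=
  Module.finrank ℂ ((Fin r → PowerSeries ℂ) ⧸ (Gbar r ℓ ⊔ O))

/-- `eN i` is the `i`-th standard basis vector of `ℕ^r`. -/
def eN {r : ℕ} (i : Fin r) : Fin r → ℕ := fun j => if j = i then 1 else 0
/-!
`F(ℓ + E_i)` is cut out of `F(ℓ)` by one linear condition, the vanishing of the `ℓ_i`-th
coefficient of the `i`-th component, so it is either all of `F(ℓ)` or a hyperplane in it.
Since `F(ℓ̄) = F(ℓ)`, both `F(ℓ + E_i)` and `F(ℓ̄ + E_i)` are of this form inside the same space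
`F(ℓ)`; the first is a proper subspace containing the second, so the two coincide.
-/

open PowerSeries LinearMap

theorem PowerSeries.natCast_le_order_iff {R : Type*} [Semiring R] {φ : R⟦X⟧} {n : ℕ} :
    (n : ℕ∞) ≤ φ.order ↔ ∀ i < n, coeff i φ = 0 :=
  ⟨fun h i hi => coeff_of_lt_order i (lt_of_lt_of_le (by exact_mod_cast hi) h),
    nat_le_order φ n⟩

theorem PowerSeries.natCast_add_one_le_order_iff {R : Type*} [Semiring R] {φ : R⟦X⟧} {n : ℕ} :
    ((n + 1 : ℕ) : ℕ∞) ≤ φ.order ↔ (n : ℕ∞) ≤ φ.order ∧ coeff n φ = 0 := by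
  rw [natCast_le_order_iff, natCast_le_order_iff, Nat.forall_lt_succ_right]

theorem Submodule.inf_ker_eq_of_le_of_not_le {K V : Type*} [Field K] [AddCommGroup V]
    [Module K V] {A : Submodule K V} {φ ψ : V →ₗ[K] K} (hle : A ⊓ ker φ ≤ A ⊓ ker ψ)
    (hψ : ¬A ≤ ker ψ) : A ⊓ ker φ = A ⊓ ker ψ := by
  refine le_antisymm hle fun y hy => ⟨hy.1, ?_⟩
  obtain ⟨x, hxA, hψx⟩ := SetLike.not_le_iff_exists.mp hψ
  have hφx : φ x ≠ 0 := fun h => hψx (hle ⟨hxA, h⟩).2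
  have hz : y - (φ y / φ x) • x ∈ A ⊓ ker φ :=
    ⟨A.sub_mem hy.1 (A.smul_mem _ hxA), by simp [hφx]⟩
  have hψz : ψ (y - (φ y / φ x) • x) = 0 := (hle hz).2
  have hψy : ψ y = 0 := hy.2
  rw [map_sub, map_smul, hψy, smul_eq_mul, zero_sub, neg_eq_zero, mul_eq_zero,
    div_eq_zero_iff] at hψz
  exact (hψz.resolve_right hψx).resolve_right hφx

theorem Gbar_antitone (r : ℕ) : Antitone (Gbar r) :=
  fun _ _ h _ hf i => le_trans (by exact_mod_cast h i) (hf i)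

theorem Ffil_antitone (r : ℕ) (O : Submodule ℂ (Fin r → PowerSeries ℂ)) : Antitone (Ffil r O) :=
  fun _ _ h => inf_le_inf_left O (Gbar_antitone r h)

theorem Gbar_add_eN (r : ℕ) (m : Fin r → ℕ) (i : Fin r) :
    Gbar r (m + eN i) = Gbar r m ⊓ ker ((coeff (m i)).comp (proj i)) := by
  ext f
  constructor
  · intro hf
    have hfi : ((m i + 1 : ℕ) : ℕ∞) ≤ (f i).order := by simpa [eN] using hf i
    exact ⟨Gbar_antitone r (fun j => Nat.le_add_right _ _) hf,
      (natCast_add_one_le_order_iff.mp hfi).2⟩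
  · rintro ⟨hf, hfi⟩ j
    by_cases hj : j = i
    · subst hj
      simpa [eN] using natCast_add_one_le_order_iff.mpr ⟨hf j, hfi⟩
    · simpa [eN, hj] using hf j

theorem Ffil_add_eN (r : ℕ) (O : Submodule ℂ (Fin r → PowerSeries ℂ)) (m : Fin r → ℕ)
    (i : Fin r) : Ffil r O (m + eN i) = Ffil r O m ⊓ ker ((coeff (m i)).comp (proj i)) := by
  rw [Ffil, Ffil, Gbar_add_eN, inf_assoc]

theorem statement16_general (r : ℕ) (O : Submodule ℂ (Fin r → PowerSeries ℂ))
    (ℓ ℓbar : Fin r → ℕ) (hle : ℓ ≤ ℓbar) (heq : Ffil r O ℓbar = Ffil r O ℓ) :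
    ∀ (G : Submodule ℂ (Fin r → PowerSeries ℂ)), G ≠ Ffil r O ℓ →
      ∀ i : Fin r, Ffil r O (ℓ + eN i) = G → Ffil r O (ℓbar + eN i) = G := by
  rintro G hG i rfl
  have hmono : Ffil r O (ℓbar + eN i) ≤ Ffil r O (ℓ + eN i) :=
    Ffil_antitone r O (add_le_add_left hle _)
  rw [Ffil_add_eN, Ffil_add_eN, heq] at hmono ⊢
  rw [Ffil_add_eN] at hG
  exact Submodule.inf_ker_eq_of_le_of_not_le hmono fun h => hG (inf_eq_left.mpr h)

/-- if `ℓ ≤ ℓ̄` and `F(ℓ̄) = F(ℓ)`, then for every subspace `G ≠ F(ℓ)` and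
every index `i`, `F(ℓ+E_i) = G` implies `F(ℓ̄+E_i) = G`. -/
theorem statement16 (r : ℕ) (hr : 1 ≤ r) (O : Submodule ℂ (Fin r → PowerSeries ℂ))
    (ℓ ℓbar : Fin r → ℕ) (hle : ℓ ≤ ℓbar) (heq : Ffil r O ℓbar = Ffil r O ℓ) :
    ∀ (G : Submodule ℂ (Fin r → PowerSeries ℂ)), G ≠ Ffil r O ℓ →
      ∀ i : Fin r, Ffil r O (ℓ + eN i) = G → Ffil r O (ℓbar + eN i) = G :=
  statement16_general r O ℓ ℓbar hle heq
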